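/- A single exaggerating agent cannot increase total social welfare in the VCG relay-selection mechanism: suppose all agents j ≠ i bid truthfully (b_j = v_j) and agent i bids b_i ≥ v_i. Then for every welfare-maximizing K-subset S' for the reported profile b, there exists a welfare-maximizing K-subset S for the truthful profile v such that the total utility under the reported profile, Σ_{j∈S'} v_j − K·max_{j∉S'} b_j, is at most the total utility under truthful bidding, Σ_{j∈S} v_j − K·max_{j∉S} v_j. -/

import Mathlib

/-!
Raising one bid can only raise the highest losing bid, so the reported profile's selection `S'`
pays at least `losingBid v S'` per agent. Against the truthful profile, a welfare-maximizing `S`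
beats `S'` in welfare, and by an exchange argument it also has the smallest highest losing bid
among all `K`-subsets, so both terms of the total utility favour `S`.
-/

open Finset

/-- The highest losing bid: the maximum of the bids of agents outside the
selected set `S` (as a supremum of the image set). -/
noncomputable def losingBid {N : ℕ} (b : Fin N → ℝ) (S : Finset (Fin N)) : ℝ :=
  sSup (b '' {j | j ∉ S})

/-- `S` is a welfare-maximizing `K`-subset for the reported bid profile `b`. -/
def IsWelfareMax {N : ℕ} (b : Fin N → ℝ) (K : ℕ) (S : Finset (Fin N)) : Prop :=
  S.card = K ∧ ∀ T : Finset (Fin N), T.card = K → ∑ j ∈ T, b j ≤ ∑ j ∈ S, b j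

lemma exists_notMem_of_card_lt_card {α : Type*} [Fintype α] {S : Finset α}
    (h : S.card < Fintype.card α) : ∃ j, j ∉ S := by
  obtain ⟨j, -, hj⟩ := exists_mem_notMem_of_card_lt_card (s := S) (t := univ) (by rwa [card_univ])
  exact ⟨j, hj⟩

section LosingBid

variable {N : ℕ}

lemma le_losingBid (v : Fin N → ℝ) (S : Finset (Fin N)) {j : Fin N} (hj : j ∉ S) :
    v j ≤ losingBid v S :=
  le_csSup (Set.toFinite _).bddAbove ⟨j, hj, rfl⟩

lemma exists_eq_losingBid (v : Fin N → ℝ) {S : Finset (Fin N)} (h : S.card < N) :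
    ∃ j, j ∉ S ∧ v j = losingBid v S := by
  obtain ⟨j, hj⟩ := exists_notMem_of_card_lt_card (by rwa [Fintype.card_fin])
  exact (Set.Nonempty.csSup_mem ⟨v j, j, hj, rfl⟩ (Set.toFinite _) : losingBid v S ∈ _)

lemma losingBid_mono {v b : Fin N → ℝ} (hvb : ∀ j, v j ≤ b j) {S : Finset (Fin N)}
    (h : S.card < N) : losingBid v S ≤ losingBid b S := by
  obtain ⟨j, hj, hjv⟩ := exists_eq_losingBid v h
  exact hjv ▸ (hvb j).trans (le_losingBid b S hj)

end LosingBid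

lemma exists_isWelfareMax {N K : ℕ} (v : Fin N → ℝ) (hKN : K ≤ N) : ∃ S, IsWelfareMax v K S := by
  have hne : (univ.powersetCard K : Finset (Finset (Fin N))).Nonempty :=
    powersetCard_nonempty.mpr (by simpa using hKN)
  obtain ⟨S, hS, hmax⟩ := exists_max_image _ (fun T => ∑ j ∈ T, v j) hne
  exact ⟨S, (mem_powersetCard.mp hS).2,
    fun T hT => hmax T (mem_powersetCard.mpr ⟨subset_univ T, hT⟩)⟩

namespace IsWelfareMax

variable {N K : ℕ} {v : Fin N → ℝ} {S : Finset (Fin N)}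

lemma le_of_notMem_of_mem (hS : IsWelfareMax v K S) {j₀ j₁ : Fin N} (h₀ : j₀ ∉ S)
    (h₁ : j₁ ∈ S) : v j₀ ≤ v j₁ := by
  have h₀' : j₀ ∉ S.erase j₁ := fun h => h₀ (mem_of_mem_erase h)
  have hcard : (insert j₀ (S.erase j₁)).card = K := by
    rw [card_insert_of_notMem h₀', card_erase_of_mem h₁, ← hS.1]
    exact Nat.sub_add_cancel (card_pos.mpr ⟨j₁, h₁⟩)
  have := hS.2 _ hcard
  rw [sum_insert h₀', sum_erase_eq_sub h₁] at this
  linarith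

lemma losingBid_le (hS : IsWelfareMax v K S) (hKN : K < N) {T : Finset (Fin N)}
    (hT : T.card = K) : losingBid v S ≤ losingBid v T := by
  obtain ⟨j₀, hj₀S, hj₀⟩ := exists_eq_losingBid v (hS.1 ▸ hKN)
  rw [← hj₀]
  by_cases hj₀T : j₀ ∈ T
  · have hST : ¬S ⊆ T := fun hsub =>
      hj₀S (eq_of_subset_of_card_le hsub (by rw [hT, hS.1]) ▸ hj₀T)
    obtain ⟨j₁, hj₁S, hj₁T⟩ := not_subset.mp hST
    exact (hS.le_of_notMem_of_mem hj₀S hj₁S).trans (le_losingBid v T hj₁T)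
  · exact le_losingBid v T hj₀T

end IsWelfareMax

theorem exaggeration_cannot_increase_total_welfare_general {N K : ℕ} (hKN : K < N)
    (i : Fin N) (v : Fin N → ℝ)
    (b : Fin N → ℝ) (hb : ∀ j, j ≠ i → b j = v j) (hbi : v i ≤ b i)
    (S' : Finset (Fin N)) (hS' : IsWelfareMax b K S') :
    ∃ S : Finset (Fin N), IsWelfareMax v K S ∧
      (∑ j ∈ S', v j) - (K : ℝ) * losingBid b S' ≤
        (∑ j ∈ S, v j) - (K : ℝ) * losingBid v S := by
  obtain ⟨S, hS⟩ := exists_isWelfareMax v hKN.le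
  refine ⟨S, hS, ?_⟩
  have hvb : ∀ j, v j ≤ b j := fun j => by
    by_cases h : j = i
    · exact h ▸ hbi
    · exact (hb j h).ge
  have hlosing : losingBid v S ≤ losingBid b S' :=
    (hS.losingBid_le hKN hS'.1).trans (losingBid_mono hvb (hS'.1 ▸ hKN))
  have hwelfare : ∑ j ∈ S', v j ≤ ∑ j ∈ S, v j := hS.2 S' hS'.1
  have := mul_le_mul_of_nonneg_left hlosing (Nat.cast_nonneg (α := ℝ) K)
  linarith

/-- A single exaggerating agent cannot increase the total social welfare:
the total utility under the reported profile (with agent `i` exaggerating and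
all other agents truthful) is at most the total utility under truthful bidding,
for some welfare-maximizing selection of the truthful profile.  The total
utility of a profile with selection `S` is `∑_{j∈S} v j - K · (highest losing bid)`,
since each of the `K` selected agents pays the highest losing bid. -/
theorem exaggeration_cannot_increase_total_welfare {N K : ℕ} (hK : 0 < K) (hKN : K < N)
    (i : Fin N) (v : Fin N → ℝ) (hv : ∀ j, 0 ≤ v j)
    (b : Fin N → ℝ) (hb : ∀ j, j ≠ i → b j = v j) (hbi : v i ≤ b i)
    (S' : Finset (Fin N)) (hS' : IsWelfareMax b K S') :
    ∃ S : Finset (Fin N), IsWelfareMax v K S ∧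
      (∑ j ∈ S', v j) - (K : ℝ) * losingBid b S' ≤
        (∑ j ∈ S, v j) - (K : ℝ) * losingBid v S :=
  exaggeration_cannot_increase_total_welfare_general hKN i v b hb hbi S' hS'
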